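/- For every (n,m)-function F, the differential uniformity δ_F satisfies δ_F ≥ 2^{n−m}; moreover F is bent (all nonzero component Walsh coefficients equal ±2^{n/2}) if and only if δ_F = 2^{n−m}. -/
import Mathlib


open Finset

/-- The vector space `F_2^n`. -/
abbrev V (n : ℕ) : Type := Fin n → ZMod 2

/-- The standard dot product on `F_2^n`. -/
def dotP {n : ℕ} (a x : V n) : ZMod 2 := ∑ i, a i * x i

/-- The Walsh transform of a Boolean function `f` on `F_2^n`. -/
def walsh {n : ℕ} (f : V n → ZMod 2) (a : V n) : ℤ :=
  ∑ x : V n, (-1 : ℤ) ^ ((f x + dotP a x).val)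

/-- The differential uniformity of a function between finite abelian groups of exponent 2. -/
def diffUnif {G H : Type*} [AddCommGroup G] [Fintype G] [DecidableEq G]
    [AddCommGroup H] [Fintype H] [DecidableEq H] (F : G → H) : ℕ :=
  Finset.sup (Finset.univ.filter fun p : G × H => p.1 ≠ 0)
    (fun p => (Finset.univ.filter fun x => F (x + p.1) + F x = p.2).card)

/-- An `(n,m)`-function is bent if every nonzero component function has all its
Walsh coefficients equal to `±2^(n/2)`. -/
def IsVectorialBent {n m : ℕ} (F : V n → V m) : Prop :=
  ∀ b : V m, b ≠ 0 → ∀ a : V n,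
    walsh (fun x => dotP b (F x)) a = 2 ^ (n / 2) ∨
    walsh (fun x => dotP b (F x)) a = -(2 ^ (n / 2))

namespace NA

def chi (c : ZMod 2) : ℤ := (-1) ^ c.val
lemma chi_add (a b : ZMod 2) : chi (a + b) = chi a * chi b := by revert a b; decide
lemma chi_zero : chi 0 = 1 := rfl
lemma chi_one : chi 1 = -1 := rfl
lemma dotP_symm {k : ℕ} (a x : V k) : dotP a x = dotP x a :=
  Finset.sum_congr rfl fun i _ => mul_comm _ _
lemma dotP_add_right {k : ℕ} (a x y : V k) : dotP a (x + y) = dotP a x + dotP a y := by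
  unfold dotP
  rw [← Finset.sum_add_distrib]
  exact Finset.sum_congr rfl fun i _ => by show a i * (x i + y i) = _; ring
lemma dotP_add_left {k : ℕ} (x y a : V k) : dotP (x + y) a = dotP x a + dotP y a := by
  rw [dotP_symm, dotP_add_right, dotP_symm a x, dotP_symm a y]
lemma dotP_zero_right {k : ℕ} (a : V k) : dotP a 0 = 0 := by simp [dotP]
lemma dotP_zero_left {k : ℕ} (x : V k) : dotP 0 x = 0 := by simp [dotP]
lemma Vadd_self {k : ℕ} (y : V k) : y + y = 0 := by
  funext i
  have : ∀ t : ZMod 2, t + t = 0 := by decide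
  exact this (y i)
lemma Vadd_eq_zero {k : ℕ} (x y : V k) : x + y = 0 ↔ x = y := by
  constructor
  · intro h
    have := congrArg (· + y) h
    simpa [add_assoc, Vadd_self] using this
  · rintro rfl; exact Vadd_self x
lemma card_V (k : ℕ) : Fintype.card (V k) = 2 ^ k := by
  simp [Fintype.card_fun]
lemma orth {k : ℕ} (c : V k) : ∑ v : V k, chi (dotP v c) = if c = 0 then (2 ^ k : ℤ) else 0 := by
  split_ifs with h
  · subst h
    simp only [dotP_zero_right, chi_zero, Finset.sum_const, card_univ, card_V, nsmul_eq_mul,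
      mul_one]
    push_cast; ring
  · obtain ⟨i, hi⟩ : ∃ i, c i ≠ 0 := by
      by_contra hall; push_neg at hall; exact h (funext hall)
    have hci : c i = 1 := by
      have h2 : ∀ t : ZMod 2, t ≠ 0 → t = 1 := by decide
      exact h2 _ hi
    set e : V k := Pi.single i 1 with he
    have hdot : dotP e c = 1 := by
      rw [show dotP e c = ∑ j, e j * c j from rfl, Finset.sum_eq_single i]
      · simp [he, hci]
      · intro j _ hj; simp [he, Pi.single_eq_of_ne hj]
      · simp
    have key : ∑ v : V k, chi (dotP (v + e) c) = ∑ v : V k, chi (dotP v c) :=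
      Equiv.sum_comp (Equiv.addRight e) (fun v => chi (dotP v c))
    have h2 : ∑ v : V k, chi (dotP v c) = -∑ v : V k, chi (dotP v c) := by
      nth_rewrite 1 [← key]
      rw [← Finset.sum_neg_distrib]
      refine Finset.sum_congr rfl fun v _ => ?_
      rw [dotP_add_left, hdot, chi_add, chi_one]; ring
    linarith
lemma int_sq_pow (t : ℤ) (k : ℕ) (h : t ^ 2 = 2 ^ k) : t = 2 ^ (k / 2) ∨ t = -2 ^ (k / 2) := by
  have h1 : t.natAbs ^ 2 = 2 ^ k := by
    have := congrArg Int.natAbs h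
    simpa [Int.natAbs_pow] using this
  have h2 : t.natAbs ∣ 2 ^ k := h1 ▸ dvd_pow_self _ two_ne_zero
  obtain ⟨j, hj, hja⟩ := (Nat.dvd_prime_pow Nat.prime_two).1 h2
  rw [hja, ← pow_mul] at h1
  have hjk : j * 2 = k := Nat.pow_right_injective (le_refl 2) h1
  have hk2 : k / 2 = j := by omega
  rcases Int.natAbs_eq t with he | he
  · left; rw [he, hja, hk2]; push_cast; ring
  · right; rw [he, hja, hk2]; push_cast; ring

variable {n m : ℕ} (F : V n → V m)

def DN (a : V n) (b : V m) : ℕ :=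
  (Finset.univ.filter fun x => F (x + a) + F x = b).card

def S (a : V n) (v : V m) : ℤ :=
  ∑ x : V n, chi (dotP v (F (x + a) + F x))

lemma S_zero_right (a : V n) : S F a 0 = 2 ^ n := by
  simp only [S, dotP_zero_left, chi_zero, Finset.sum_const, card_univ, card_V, nsmul_eq_mul,
    mul_one]
  push_cast; ring

lemma S_zero_left (v : V m) : S F 0 v = 2 ^ n := by
  simp only [S, add_zero, Vadd_self, dotP_zero_right, chi_zero, Finset.sum_const, card_univ,
    card_V, nsmul_eq_mul, mul_one]
  push_cast; ring

lemma key_I (a : V n) (b : V m) :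
    (2 ^ m : ℤ) * DN F a b = ∑ v : V m, chi (dotP v b) * S F a v := by
  have step : ∀ v : V m, chi (dotP v b) * S F a v
      = ∑ x : V n, chi (dotP v (F (x + a) + F x + b)) := by
    intro v
    rw [S, Finset.mul_sum]
    refine Finset.sum_congr rfl fun x _ => ?_
    rw [dotP_add_right v (F (x + a) + F x) b, chi_add]; ring
  symm
  calc ∑ v : V m, chi (dotP v b) * S F a v
      = ∑ v : V m, ∑ x : V n, chi (dotP v (F (x + a) + F x + b)) :=
        Finset.sum_congr rfl fun v _ => step v
    _ = ∑ x : V n, ∑ v : V m, chi (dotP v (F (x + a) + F x + b)) := Finset.sum_comm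
    _ = ∑ x : V n, if F (x + a) + F x = b then (2 ^ m : ℤ) else 0 := by
        refine Finset.sum_congr rfl fun x _ => ?_
        rw [orth]
        simp only [Vadd_eq_zero]
    _ = (2 ^ m : ℤ) * DN F a b := by
        rw [← Finset.sum_filter, Finset.sum_const, DN, nsmul_eq_mul, mul_comm]

lemma key_II (a : V n) (v : V m) :
    S F a v = ∑ b : V m, (DN F a b : ℤ) * chi (dotP v b) := by
  rw [S, ← Finset.sum_fiberwise univ (fun x => F (x + a) + F x)
    (fun x => chi (dotP v (F (x + a) + F x)))]
  refine Finset.sum_congr rfl fun b _ => ?_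
  rw [Finset.sum_congr rfl (fun x hx => by
    rw [(Finset.mem_filter.1 hx).2]), Finset.sum_const, DN, nsmul_eq_mul]

lemma key_III (v : V m) (u : V n) :
    (walsh (fun x => dotP v (F x)) u) ^ 2 = ∑ a : V n, chi (dotP u a) * S F a v := by
  have hw : walsh (fun x => dotP v (F x)) u = ∑ x : V n, chi (dotP v (F x) + dotP u x) := rfl
  rw [hw, sq, Finset.sum_mul_sum]
  calc ∑ x : V n, ∑ y : V n, chi (dotP v (F x) + dotP u x) * chi (dotP v (F y) + dotP u y)
      = ∑ x : V n, ∑ a : V n, chi (dotP u a) * chi (dotP v (F (x + a)) + dotP v (F x)) := by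
        refine Finset.sum_congr rfl fun x _ => ?_
        rw [← Equiv.sum_comp (Equiv.addLeft x)
          (fun y => chi (dotP v (F x) + dotP u x) * chi (dotP v (F y) + dotP u y))]
        refine Finset.sum_congr rfl fun a _ => ?_
        have h1 : (Equiv.addLeft x) a = x + a := rfl
        rw [h1, ← chi_add, ← chi_add]
        congr 1
        have h2 : dotP u (x + a) = dotP u x + dotP u a := dotP_add_right u x a
        have h3 : (2 : ZMod 2) = 0 := by decide
        rw [h2]; linear_combination dotP u x * h3
    _ = ∑ a : V n, chi (dotP u a) * S F a v := by
        rw [Finset.sum_comm]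
        refine Finset.sum_congr rfl fun a _ => ?_
        rw [S, Finset.mul_sum]
        refine Finset.sum_congr rfl fun x _ => ?_
        rw [dotP_add_right]

lemma DN_sum (a : V n) : ∑ b : V m, DN F a b = 2 ^ n := by
  have h := Finset.card_eq_sum_card_fiberwise
      (f := fun x : V n => F (x + a) + F x) (s := univ) (t := univ) (fun x _ => mem_univ _)
  rw [card_univ, card_V] at h
  exact h.symm

lemma bent_S_eq_zero (hb : IsVectorialBent F) {a : V n} (ha : a ≠ 0) {v : V m} (hv : v ≠ 0) :
    S F a v = 0 := by
  set W : V n → ℤ := walsh (fun x => dotP v (F x)) with hW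
  have hWQ : ∀ u : V n, W u ^ 2 = ((2 : ℤ) ^ (n / 2)) ^ 2 := by
    intro u; rcases hb v hv u with h | h <;> rw [hW, h] <;> ring
  have h1 : ∑ u : V n, chi (dotP u a) * W u ^ 2 = 0 := by
    calc ∑ u : V n, chi (dotP u a) * W u ^ 2
        = (∑ u : V n, chi (dotP u a)) * ((2 : ℤ) ^ (n / 2)) ^ 2 := by
          rw [Finset.sum_mul]
          exact Finset.sum_congr rfl fun u _ => by rw [hWQ u]
      _ = 0 := by rw [orth]; simp [ha]
  have h2 : ∑ u : V n, chi (dotP u a) * W u ^ 2 = S F a v * 2 ^ n := by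
    calc ∑ u : V n, chi (dotP u a) * W u ^ 2
        = ∑ u : V n, ∑ c : V n, chi (dotP u (a + c)) * S F c v := by
          refine Finset.sum_congr rfl fun u _ => ?_
          rw [hW, key_III, Finset.mul_sum]
          refine Finset.sum_congr rfl fun c _ => ?_
          rw [dotP_add_right, chi_add]; ring
      _ = ∑ c : V n, (∑ u : V n, chi (dotP u (a + c))) * S F c v := by
          rw [Finset.sum_comm]
          exact Finset.sum_congr rfl fun c _ => by rw [Finset.sum_mul]
      _ = ∑ c : V n, (if a = c then (2 ^ n : ℤ) else 0) * S F c v := by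
          refine Finset.sum_congr rfl fun c _ => ?_
          rw [orth]
          simp only [Vadd_eq_zero]
      _ = S F a v * 2 ^ n := by
          rw [Finset.sum_eq_single a
            (fun c _ hc => by rw [if_neg (fun h => hc h.symm), zero_mul]) (by simp)]
          rw [if_pos rfl]; ring
  have h3 := h1 ▸ h2
  have hpos : (2 : ℤ) ^ n ≠ 0 := by positivity
  exact (mul_eq_zero.1 h3.symm).resolve_right hpos

lemma bent_DN (hb : IsVectorialBent F) (hm : m ≤ n) {a : V n} (ha : a ≠ 0) (b : V m) :
    DN F a b = 2 ^ (n - m) := by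
  have h := key_I F a b
  rw [Finset.sum_eq_single 0 (fun v _ hv => by
      rw [bent_S_eq_zero F hb ha hv, mul_zero]) (by simp)] at h
  rw [dotP_zero_left, chi_zero, one_mul, S_zero_right] at h
  have h4 : (2 : ℤ) ^ m * (DN F a b : ℤ) = 2 ^ m * 2 ^ (n - m) := by
    rw [h, ← pow_add, Nat.add_sub_cancel' hm]
  have h5 := mul_left_cancel₀ (by positivity : (2 : ℤ) ^ m ≠ 0) h4
  exact_mod_cast h5

lemma DN_const_walsh (hDN : ∀ a : V n, a ≠ 0 → ∀ b : V m, DN F a b = 2 ^ (n - m))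
    {v : V m} (hv : v ≠ 0) (u : V n) :
    (walsh (fun x => dotP v (F x)) u) ^ 2 = 2 ^ n := by
  have hS : ∀ a : V n, a ≠ 0 → S F a v = 0 := by
    intro a ha
    rw [key_II]
    have hc : ∀ b : V m, (DN F a b : ℤ) * chi (dotP v b) = 2 ^ (n - m) * chi (dotP b v) := by
      intro b; rw [hDN a ha b, dotP_symm]; push_cast; ring
    rw [Finset.sum_congr rfl (fun b _ => hc b), ← Finset.mul_sum, orth]
    simp [hv]
  rw [key_III, Finset.sum_eq_single 0 (fun a _ ha => by rw [hS a ha, mul_zero]) (by simp)]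
  rw [dotP_zero_right, chi_zero, one_mul, S_zero_left]

end NA


set_option maxHeartbeats 1000000 in
open NA in
/-- The differential uniformity of an `(n,m)`-function is at least `2^(n-m)`,
with equality iff `F` is bent. -/
theorem diffUnif_ge_and_bent_iff {n m : ℕ} (hn : 1 ≤ n) (hm : m ≤ n) (F : V n → V m) :
    2 ^ (n - m) ≤ diffUnif F ∧ (IsVectorialBent F ↔ diffUnif F = 2 ^ (n - m)) := by
  set a0 : V n := fun _ => 1 with ha0def
  have ha0 : a0 ≠ 0 := by
    intro h
    have := congrFun h ⟨0, hn⟩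
    simp [ha0def] at this
  have hconst : ∑ _b : V m, 2 ^ (n - m) = 2 ^ n := by
    rw [Finset.sum_const, card_univ, card_V, smul_eq_mul, ← pow_add, Nat.add_sub_cancel' hm]
  have hmem : ∀ (a : V n) (b : V m), a ≠ 0 →
      ((a, b) ∈ Finset.univ.filter fun p : V n × V m => p.1 ≠ 0) :=
    fun a b ha => Finset.mem_filter.2 ⟨mem_univ _, ha⟩
  have hDle : ∀ (a : V n) (b : V m), a ≠ 0 → DN F a b ≤ diffUnif F := by
    intro a b ha
    exact Finset.le_sup (α := ℕ)
      (s := Finset.univ.filter fun p : V n × V m => p.1 ≠ 0)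
      (f := fun p : V n × V m => (Finset.univ.filter fun x => F (x + p.1) + F x = p.2).card)
      (b := (a, b)) (hmem a b ha)
  have part1 : 2 ^ (n - m) ≤ diffUnif F := by
    have hsumle : ∑ _b : V m, 2 ^ (n - m) ≤ ∑ b : V m, DN F a0 b := by
      rw [DN_sum, hconst]
    obtain ⟨b0, -, hb0⟩ := Finset.exists_le_of_sum_le Finset.univ_nonempty hsumle
    exact le_trans hb0 (hDle a0 b0 ha0)
  refine ⟨part1, ?_, ?_⟩
  · intro hbent
    refine le_antisymm ?_ part1
    unfold diffUnif
    refine Finset.sup_le fun p hp => ?_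
    rw [Finset.mem_filter] at hp
    exact le_of_eq (bent_DN F hbent hm hp.2 p.2)
  · intro hd v hv u
    have hDN : ∀ a : V n, a ≠ 0 → ∀ b : V m, DN F a b = 2 ^ (n - m) := by
      intro a ha
      have hle : ∀ b : V m, b ∈ (univ : Finset (V m)) → DN F a b ≤ 2 ^ (n - m) := by
        intro b _
        rw [← hd]
        exact hDle a b ha
      have hsum : ∑ b : V m, DN F a b = ∑ _b : V m, 2 ^ (n - m) := by
        rw [DN_sum, hconst]
      have := (Finset.sum_eq_sum_iff_of_le hle).1 hsum
      intro b; exact this b (mem_univ b)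
    exact int_sq_pow _ n (DN_const_walsh F hDN hv u)
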